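/- (Correctness of the list-decoder for the new subspace codes.) Let s ≥ 1, 1 ≤ k ≤ m, and let γ ∈ F_{q^m} be such that γ, γ^q, ..., γ^{q^{m−1}} are pairwise distinct. Let α_1, ..., α_n ∈ F_{q^m} be linearly independent over F_q with k ≤ n, let u ∈ F_{q^m}^k be a message with linearized message polynomial f_u(X) = ∑_{j=0}^{k−1} u_j X^{q^j}, and let V be the F_q-linear span in F_{q^m}^{s+1} of the vectors (α_i, f_u(α_i), f_u(γα_i), ..., f_u(γ^{s−1}α_i)), i = 1, ..., n. Let ρ, t ≥ 0 and let U be an F_q-subspace of F_{q^m}^{s+1} of dimension r = n−ρ+t with dim_{F_q}(U ∩ V) ≥ n−ρ. Set d = ⌈(r + s(k−1) + 1)/(s+1)⌉ and assume k ≤ d. If s·ρ + t < n·s − s(k−1), then: (i) there exist linearized polynomials Q_0, ..., Q_s over F_{q^m}, not all zero, with Q_0 of q-degree at most d−1 and each Q_i (i ≥ 1) of q-degree at most d−k, vanishing on U (i.e., Q_0(x) + ∑_{i=1}^{s} Q_i(y_i) = 0 for all (x, y_1, ..., y_s) ∈ U); (ii) for every such nonzero tuple (Q_0, ..., Q_s),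 the message polynomial f_u satisfies Q_0(X) + ∑_{i=1}^{s} Q_i(f_u(γ^{i−1}X)) = 0 as a polynomial identity; and (iii) the number of linearized polynomials f of q-degree at most k−1 satisfying this identity is at most q^{m(s−1)}. -/

import Mathlib

/-!
Evaluating a linearized polynomial is `F_q`-linear, because the `q`-power Frobenius is.
Hence the interpolation conditions on an `F_q`-basis of `U` form a homogeneous linear system
over `F_{q^m}` in the coefficients of the `Q_i`, with more unknowns than equations: this gives (i).

The polynomial `P = Q_0(X) + ∑ Q_i(f_u(γ^{i-1} X))` has degree at most `q^{d-1}`. On `V` every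
coordinate is determined by the first one, and `P` vanishes at the first coordinate of every
vector of `U ∩ V`; these form at least `q^(n-ρ) ≥ q^d` distinct roots, so `P = 0`: this is (ii).

For (iii), two solutions differ by an element of the kernel of the additive map
`f ↦ ∑ Q_i(f(γ^{i-1} X))`. Let `i₀` be the lowest `q`-degree occurring in `Q_1, …, Q_s` and
`A(Y) = ∑_i c_i Y^{i-1}`, with `c_i` the `X^{q^{i₀}}`-coefficient of `Q_i`; then `A ≠ 0` has
degree `< s`. In the image of `f`, the coefficient of `X^{q^{i₀+j}}` is `f_j^{q^{i₀}} A(γ^{q^{i₀+j}})`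
plus terms in `f_0, …, f_{j-1}`. The `γ^{q^{i₀+j}}` are pairwise distinct, so `A` vanishes at at
most `s - 1` of them, and a solution is determined by at most `s - 1` of its coefficients.
-/

open Polynomial

noncomputable def linPoly (q : ℕ) {F : Type*} [Field F] {D : ℕ} (a : Fin D → F) : Polynomial F :=
  ∑ i : Fin D, Polynomial.C (a i) * Polynomial.X ^ (q ^ (i : ℕ))

open FiniteField

section Coefficients

variable {F : Type*} [Field F] (q : ℕ) {D E : ℕ}

noncomputable def linPolyₗ : (Fin D → F) →ₗ[F] F[X] where
  toFun := linPoly q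
  map_add' a a' := by simp only [linPoly, Pi.add_apply, C_add, add_mul, Finset.sum_add_distrib]
  map_smul' c a := by simp only [linPoly, Pi.smul_apply, smul_eq_mul, C_mul, mul_assoc,
    RingHom.id_apply, Finset.smul_sum, smul_eq_C_mul]

@[simp] lemma linPolyₗ_apply (a : Fin D → F) : linPolyₗ q a = linPoly q a := rfl

lemma linPoly_sub (a a' : Fin D → F) : linPoly q (a - a') = linPoly q a - linPoly q a' :=
  map_sub (linPolyₗ q) a a'

lemma eval_linPoly (a : Fin D → F) (x : F) :
    (linPoly q a).eval x = ∑ i, a i * x ^ q ^ (i : ℕ) := by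
  simp [linPoly, eval_finsetSum]

lemma coeff_linPoly (hq : 1 < q) (a : Fin D → F) (i : Fin D) :
    (linPoly q a).coeff (q ^ (i : ℕ)) = a i := by
  simp [linPoly, finsetSum_coeff, (Nat.pow_right_injective hq).eq_iff, Fin.val_inj]

lemma linPoly_ne_zero (hq : 1 < q) {a : Fin D → F} (ha : a ≠ 0) : linPoly q a ≠ 0 := by
  obtain ⟨i, hi⟩ := Function.ne_iff.mp ha
  intro h
  simpa [← coeff_linPoly q hq a i, h] using hi.symm

lemma natDegree_linPoly_le (hq : 1 ≤ q) (a : Fin D → F) :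
    (linPoly q a).natDegree ≤ q ^ (D - 1) := by
  refine natDegree_sum_le_of_forall_le _ _ fun i _ => (natDegree_C_mul_X_pow_le _ _).trans ?_
  exact Nat.pow_le_pow_right hq (by omega)

lemma linPoly_comp_C_mul_X (a : Fin D → F) (g : F) :
    (linPoly q a).comp (C g * X) = linPoly q (fun j => a j * g ^ q ^ (j : ℕ)) := by
  simp only [linPoly, sum_comp, mul_comp, C_comp, X_pow_comp, mul_pow, ← C_pow, C_mul, mul_assoc]

lemma natDegree_linPoly_comp_le (hq : 1 ≤ q) (c : Fin D → F) (a : Fin E → F) (g : F) :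
    ((linPoly q c).comp ((linPoly q a).comp (C g * X))).natDegree ≤ q ^ (D - 1 + (E - 1)) := by
  rw [linPoly_comp_C_mul_X, pow_add]
  exact natDegree_comp_le.trans
    (Nat.mul_le_mul (natDegree_linPoly_le q hq _) (natDegree_linPoly_le q hq _))

end Coefficients

lemma frobeniusAlgHom_pow_apply (K : Type*) [Field K] [Fintype K] {R : Type*} [CommRing R]
    [Algebra K R] (i : ℕ) (x : R) : (frobeniusAlgHom K R ^ i) x = x ^ Fintype.card K ^ i := by
  rw [AlgHom.coe_pow, coe_frobeniusAlgHom, pow_iterate]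

section Frobenius

variable (K : Type*) {F : Type*} [Field K] [Fintype K] [Field F] [Algebra K F] {q D E : ℕ}

noncomputable def linPolyEvalₗ (a : Fin D → F) : F →ₗ[K] F :=
  ∑ i, LinearMap.mulLeft K (a i) ∘ₗ (frobeniusAlgHom K F ^ (i : ℕ)).toLinearMap

variable {K}

lemma linPolyEvalₗ_apply (hK : Fintype.card K = q) (a : Fin D → F) (x : F) :
    linPolyEvalₗ K a x = (linPoly q a).eval x := by
  subst hK
  simp only [linPolyEvalₗ, LinearMap.coe_sum, Finset.sum_apply, LinearMap.comp_apply,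
    AlgHom.toLinearMap_apply, frobeniusAlgHom_pow_apply, LinearMap.mulLeft_apply, eval_linPoly]

lemma linPoly_comp_sub (hK : Fintype.card K = q) (c : Fin D → F) (P Q : F[X]) :
    (linPoly q c).comp (P - Q) = (linPoly q c).comp P - (linPoly q c).comp Q := by
  subst hK
  simp only [linPoly, sum_comp, mul_comp, C_comp, X_pow_comp]
  simp only [← frobeniusAlgHom_pow_apply K, map_sub, mul_sub, Finset.sum_sub_distrib]

lemma linPoly_pow (hK : Fintype.card K = q) (a : Fin E → F) (i : ℕ) :
    linPoly q a ^ q ^ i = ∑ j, C (a j ^ q ^ i) * X ^ q ^ (i + j) := by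
  subst hK
  rw [← frobeniusAlgHom_pow_apply K, linPoly, map_sum]
  refine Finset.sum_congr rfl fun j _ => ?_
  rw [map_mul, frobeniusAlgHom_pow_apply, frobeniusAlgHom_pow_apply, ← C_pow, ← pow_mul, pow_add,
    mul_comm (_ ^ i)]

lemma linPoly_comp_linPoly (hK : Fintype.card K = q) (c : Fin D → F) (a : Fin E → F) :
    (linPoly q c).comp (linPoly q a) =
      ∑ i, ∑ j, C (c i * a j ^ q ^ (i : ℕ)) * X ^ q ^ ((i : ℕ) + j) := by
  nth_rewrite 1 [linPoly]
  simp only [sum_comp, mul_comp, C_comp, X_pow_comp, linPoly_pow hK, Finset.mul_sum, C_mul,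
    mul_assoc]

lemma coeff_linPoly_comp_linPoly_of_forall_lt (hK : Fintype.card K = q) {c : Fin D → F}
    {a : Fin E → F} {i₀ : Fin D} {j₀ : Fin E} (hc : ∀ i < i₀, c i = 0) (ha : ∀ j < j₀, a j = 0) :
    ((linPoly q c).comp (linPoly q a)).coeff (q ^ ((i₀ : ℕ) + j₀)) = c i₀ * a j₀ ^ q ^ (i₀ : ℕ) := by
  have hq : 2 ≤ q := hK ▸ Fintype.one_lt_card
  rw [linPoly_comp_linPoly hK, ← Fintype.sum_prod_type']
  simp only [finsetSum_coeff, coeff_C_mul_X_pow, (Nat.pow_right_injective hq).eq_iff]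
  rw [Finset.sum_eq_single (i₀, j₀) _ (by simp), if_pos rfl]
  rintro ⟨i, j⟩ - hij
  refine ite_eq_right_iff.mpr fun hsum => ?_
  rcases lt_trichotomy i i₀ with hi | rfl | hi
  · rw [hc i hi, zero_mul]
  · simp only [Nat.add_left_cancel_iff, Fin.val_inj] at hsum
    exact absurd (by rw [hsum]) hij
  · rw [ha j (by simp only [Fin.lt_def] at hi ⊢ hsum; omega), zero_pow (by positivity), mul_zero]

lemma eq_zero_of_sum_linPoly_comp_eq_zero (hK : Fintype.card K = q) {s k : ℕ}
    {b : Fin s → Fin E → F} {i₀ : Fin E} (hmin : ∀ i < i₀, ∀ l, b l i = 0) {γ : F} {a : Fin k → F}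
    (ha : ∀ j, (∑ l, C (b l i₀) * X ^ (l : ℕ)).IsRoot (γ ^ q ^ ((i₀ : ℕ) + j)) → a j = 0)
    (h : ∑ l, (linPoly q (b l)).comp ((linPoly q a).comp (C (γ ^ (l : ℕ)) * X)) = 0) :
    a = 0 := by
  have hq : 0 < q := hK ▸ Fintype.card_pos
  funext j
  induction j using WellFoundedLT.induction with | _ j ih => ?_
  have hcoeff := congrArg (coeff · (q ^ ((i₀ : ℕ) + j))) h
  simp only [finsetSum_coeff, linPoly_comp_C_mul_X, coeff_zero] at hcoeff
  rw [Finset.sum_congr rfl fun l _ => coeff_linPoly_comp_linPoly_of_forall_lt hK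
    (fun i hi => hmin i hi l) (fun j' hj' => by rw [ih j' hj', Pi.zero_apply, zero_mul])] at hcoeff
  have hfactor : ∑ l : Fin s, b l i₀ * (a j * (γ ^ (l : ℕ)) ^ q ^ (j : ℕ)) ^ q ^ (i₀ : ℕ) =
      a j ^ q ^ (i₀ : ℕ) * (∑ l, C (b l i₀) * X ^ (l : ℕ)).eval (γ ^ q ^ ((i₀ : ℕ) + j)) := by
    simp only [eval_finsetSum, eval_mul, eval_C, eval_pow, eval_X, Finset.mul_sum]
    refine Finset.sum_congr rfl fun l _ => ?_
    rw [mul_pow, ← pow_mul, ← pow_mul, ← pow_mul, pow_add]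
    ring
  rw [hfactor] at hcoeff
  rcases mul_eq_zero.mp hcoeff with hj | hroot
  · exact pow_eq_zero_iff (by positivity) |>.mp hj
  · exact ha j hroot

end Frobenius

lemma ncard_setOf_isRoot_le {F ι : Type*} [Field F] {A : F[X]} (hA : A ≠ 0) {f : ι → F}
    (hf : Function.Injective f) : {j | A.IsRoot (f j)}.ncard ≤ A.natDegree :=
  (Set.ncard_le_ncard_of_injOn f (fun _ hj => (mem_rootSet_of_ne hA).mpr
    (by rw [coe_aeval_eq_eval]; exact hj)) hf.injOn (rootSet_finite A F)).trans
    (ncard_rootSet_le A F)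

lemma succ_eq_of_mem_span_range_cons {R M ι : Type*} [Semiring R] [AddCommMonoid M] [Module R M]
    {s : ℕ} (L : Fin s → M →ₗ[R] M) (α : ι → M) {w : Fin (s + 1) → M}
    (hw : w ∈ Submodule.span R (Set.range fun i => (Fin.cons (α i) fun j => L j (α i) :
      Fin (s + 1) → M))) (j : Fin s) :
    w j.succ = L j (w 0) := by
  induction hw using Submodule.span_induction with
  | mem w hw => obtain ⟨i, rfl⟩ := hw; simp
  | zero => simp
  | add w w' _ _ hw hw' => simp [hw, hw']
  | smul c w _ hw => simp [hw]

lemma eq_zero_of_eval_eq_zero_of_injOn {K F M : Type*} [Field K] [Fintype K] [Field F]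
    [AddCommGroup M] [Module K M] [Finite M] (W : Submodule K M) {f : M → F}
    (hf : Set.InjOn f W) {P : F[X]} (hP : ∀ w ∈ W, P.eval (f w) = 0)
    (hdeg : P.natDegree < Fintype.card K ^ Module.finrank K W) : P = 0 := by
  have := Fintype.ofFinite W
  refine eq_zero_of_natDegree_lt_card_of_eval_eq_zero P (f := fun w : W => f w)
    (fun w w' h => Subtype.ext (hf w.2 w'.2 h)) (fun w => hP w w.2) ?_
  rwa [Module.card_eq_pow_finrank (K := K)]

lemma ceil_div_le_sub {n ρ t s k : ℕ} (herr : s * ρ + t + s * (k - 1) < n * s) :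
    (n - ρ + t + s * (k - 1) + 1 + s) / (s + 1) ≤ n - ρ := by
  have hρ : ρ < n := Nat.lt_of_mul_lt_mul_left (a := s) (by rw [mul_comm s n]; omega)
  obtain ⟨N, rfl⟩ : ∃ N, n = ρ + N := ⟨n - ρ, by omega⟩
  rw [Nat.add_sub_cancel_left] at *
  refine Nat.lt_succ_iff.mp ((Nat.div_lt_iff_lt_mul s.succ_pos).mpr ?_)
  nlinarith

lemma lt_add_mul_ceil_div_sub {r s k : ℕ} (hk : 1 ≤ k)
    (hkd : k ≤ (r + s * (k - 1) + 1 + s) / (s + 1)) :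
    r < (r + s * (k - 1) + 1 + s) / (s + 1) +
      s * ((r + s * (k - 1) + 1 + s) / (s + 1) - k + 1) := by
  have hdiv := Nat.div_add_mod (r + s * (k - 1) + 1 + s) (s + 1)
  have hmod := Nat.mod_lt (r + s * (k - 1) + 1 + s) s.succ_pos
  generalize (r + s * (k - 1) + 1 + s) / (s + 1) = d at *
  generalize (r + s * (k - 1) + 1 + s) % (s + 1) = c at *
  obtain ⟨k, rfl⟩ : ∃ k', k = k' + 1 := ⟨k - 1, by omega⟩
  obtain ⟨e, rfl⟩ : ∃ e, d = k + 1 + e := ⟨d - (k + 1), by omega⟩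
  simp only [Nat.add_sub_cancel] at hdiv ⊢
  rw [show k + 1 + e - (k + 1) + 1 = e + 1 by omega]
  nlinarith

lemma finrank_eq_of_card_eq_pow {K F : Type*} [Field K] [Field F] [Algebra K F] [Fintype K]
    [Fintype F] {q m : ℕ} (hK : Fintype.card K = q) (hF : Fintype.card F = q ^ m) :
    Module.finrank K F = m := by
  have hq : 2 ≤ q := hK ▸ Fintype.one_lt_card
  rw [Module.card_eq_pow_finrank (K := K), hK] at hF
  exact Nat.pow_right_injective hq hF

section Decoding

variable {K F : Type*} [Field K] [Fintype K] [Field F] [Algebra K F] {q : ℕ}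

theorem exists_interpolation [Finite F] (hK : Fintype.card K = q) {s D E : ℕ}
    (U : Submodule K (Fin (s + 1) → F)) (hU : Module.finrank K U < D + s * E) :
    ∃ (b0 : Fin D → F) (b : Fin s → Fin E → F), ¬(b0 = 0 ∧ b = 0) ∧
      ∀ w ∈ U, (linPoly q b0).eval (w 0) + ∑ i : Fin s, (linPoly q (b i)).eval (w i.succ) = 0 := by
  have : Module.Finite K U := Module.Finite.of_finite
  let β := Module.finBasis K U
  let Φ : ((Fin D → F) × (Fin s → Fin E → F)) →ₗ[F] (Fin (Module.finrank K U) → F) :=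
    LinearMap.pi fun i => leval ((β i : Fin (s + 1) → F) 0) ∘ₗ linPolyₗ q ∘ₗ LinearMap.fst F _ _ +
      ∑ l, leval ((β i : Fin (s + 1) → F) l.succ) ∘ₗ linPolyₗ q ∘ₗ LinearMap.proj l ∘ₗ
        LinearMap.snd F _ _
  obtain ⟨⟨b0, b⟩, hker, hne⟩ := (Submodule.ne_bot_iff _).mp
    (LinearMap.ker_ne_bot_of_finrank_lt (f := Φ) (by simpa [Module.finrank_pi_fintype] using hU))
  refine ⟨b0, b, fun h => hne (by simp [h]), ?_⟩
  let Λ : (Fin (s + 1) → F) →ₗ[K] F :=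
    linPolyEvalₗ K b0 ∘ₗ LinearMap.proj 0 + ∑ l, linPolyEvalₗ K (b l) ∘ₗ LinearMap.proj l.succ
  have hΛ : Λ ∘ₗ U.subtype = 0 := β.ext fun i => by
    simpa [Φ, Λ, linPolyEvalₗ_apply hK] using congrFun (LinearMap.mem_ker.mp hker) i
  intro w hw
  simpa [Λ, linPolyEvalₗ_apply hK] using LinearMap.congr_fun hΛ ⟨w, hw⟩

theorem interpolation_comp_message_eq_zero [Finite F] (hK : Fintype.card K = q) {s k d n : ℕ}
    (hk : 1 ≤ k) (hkd : k ≤ d) {U : Submodule K (Fin (s + 1) → F)} {α : Fin n → F}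
    {u : Fin k → F} {γ : F}
    (hdim : d ≤ Module.finrank K ↥(U ⊓ Submodule.span K (Set.range fun i : Fin n =>
      Fin.cons (α i) fun j : Fin s => (linPoly q u).eval (γ ^ (j : ℕ) * α i))))
    {b0 : Fin d → F} {b : Fin s → Fin (d - k + 1) → F}
    (hU : ∀ w ∈ U, (linPoly q b0).eval (w 0) + ∑ i : Fin s, (linPoly q (b i)).eval (w i.succ) = 0) :
    linPoly q b0 +
      ∑ l : Fin s, (linPoly q (b l)).comp ((linPoly q u).comp (C (γ ^ (l : ℕ)) * X)) = 0 := by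
  have hq : 1 < q := hK ▸ Fintype.one_lt_card
  set L : Fin s → F →ₗ[K] F := fun j => linPolyEvalₗ K u ∘ₗ LinearMap.mulLeft K (γ ^ (j : ℕ))
  have hgraph : (fun i : Fin n => (Fin.cons (α i) fun j : Fin s =>
      (linPoly q u).eval (γ ^ (j : ℕ) * α i) : Fin (s + 1) → F)) =
      fun i => Fin.cons (α i) fun j => L j (α i) := by
    simp [L, linPolyEvalₗ_apply hK]
  rw [hgraph] at hdim
  set W := U ⊓ Submodule.span K (Set.range fun i => (Fin.cons (α i) fun j => L j (α i) :
    Fin (s + 1) → F))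
  have hW : ∀ w ∈ W, ∀ j : Fin s, w j.succ = (linPoly q u).eval (γ ^ (j : ℕ) * w 0) :=
    fun w hw j => by
      rw [succ_eq_of_mem_span_range_cons L α (Submodule.mem_inf.mp hw).2 j]
      simp [L, linPolyEvalₗ_apply hK]
  refine eq_zero_of_eval_eq_zero_of_injOn W (f := fun w => w 0) ?_ ?_ ?_
  · intro w hw w' hw' h
    funext i
    refine Fin.cases h (fun j => ?_) i
    rw [hW w hw, hW w' hw', show w 0 = w' 0 from h]
  · intro w hw
    simp only [eval_add, eval_finsetSum, eval_comp, eval_mul, eval_C, eval_X, ← hW w hw]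
    exact hU w (Submodule.mem_inf.mp hw).1
  · calc _ ≤ q ^ (d - 1) := natDegree_add_le_of_degree_le (natDegree_linPoly_le q hq.le b0)
          (natDegree_sum_le_of_forall_le _ _ fun l _ =>
            (natDegree_linPoly_comp_le q hq.le _ _ _).trans (Nat.pow_le_pow_right hq.le (by omega)))
      _ < q ^ d := Nat.pow_lt_pow_right hq (by omega)
      _ ≤ _ := hK ▸ Nat.pow_le_pow_right (by omega) hdim

theorem ncard_message_candidates_le [Fintype F] {m : ℕ} (hK : Fintype.card K = q)
    (hF : Fintype.card F = q ^ m) {γ : F} (hγ : ∀ i < m, ∀ j < m, i ≠ j → γ ^ q ^ i ≠ γ ^ q ^ j)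
    {s k D E : ℕ} (hEk : E + k ≤ m + 1) (b0 : Fin D → F) (b : Fin s → Fin E → F)
    (hne : ¬(b0 = 0 ∧ b = 0)) :
    Set.ncard {a : Fin k → F | linPoly q b0 +
      ∑ l : Fin s, (linPoly q (b l)).comp ((linPoly q a).comp (C (γ ^ (l : ℕ)) * X)) = 0} ≤
      q ^ (m * (s - 1)) := by
  have hq : 1 < q := hK ▸ Fintype.one_lt_card
  set S := {a : Fin k → F | linPoly q b0 +
      ∑ l : Fin s, (linPoly q (b l)).comp ((linPoly q a).comp (C (γ ^ (l : ℕ)) * X)) = 0}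
  by_cases hb : b = 0
  · suffices S = ∅ by simp [this]
    refine Set.eq_empty_of_forall_notMem fun a ha => linPoly_ne_zero q hq (fun h => hne ⟨h, hb⟩) ?_
    simpa [S, hb, linPoly] using ha
  obtain ⟨i₀, ⟨l₀, hl₀⟩, hmin⟩ := WellFounded.has_min wellFounded_lt {i | ∃ l, b l i ≠ 0} <| by
    obtain ⟨l, hl⟩ := Function.ne_iff.mp hb
    obtain ⟨i, hi⟩ := Function.ne_iff.mp hl
    exact ⟨i, l, hi⟩
  set A : F[X] := ∑ l : Fin s, C (b l i₀) * X ^ (l : ℕ)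
  have hA : A ≠ 0 := fun h => hl₀ <| by
    simpa [A, finsetSum_coeff, coeff_C_mul_X_pow, Fin.val_inj] using congrArg (coeff · l₀) h
  set B : Set (Fin k) := {j | A.IsRoot (γ ^ q ^ ((i₀ : ℕ) + j))}
  have hB : B.ncard ≤ s - 1 := by
    refine (ncard_setOf_isRoot_le hA fun j j' h => by_contra fun hjj' =>
      hγ _ (by omega) _ (by omega) (by simpa [Fin.val_inj] using hjj') h).trans ?_
    exact natDegree_sum_le_of_forall_le _ _ fun l _ =>
      (natDegree_C_mul_X_pow_le _ _).trans (by omega)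
  have hinj : Set.InjOn (fun a : Fin k → F => fun j : B => a j) S := by
    intro a ha a' ha' haa'
    rw [← sub_eq_zero]
    refine eq_zero_of_sum_linPoly_comp_eq_zero (b := b) (i₀ := i₀) (γ := γ) hK
      (fun i hi l => not_not.mp fun h => hmin i ⟨l, h⟩ hi)
      (fun j hj => by simpa [sub_eq_zero] using congrFun haa' ⟨j, hj⟩) ?_
    simp only [linPoly_sub, sub_comp, linPoly_comp_sub hK, Finset.sum_sub_distrib]
    rw [← add_sub_add_left_eq_sub _ _ (linPoly q b0), ha, ha', sub_self]
  calc S.ncard ≤ (Set.univ : Set (B → F)).ncard :=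
        Set.ncard_le_ncard_of_injOn _ (fun _ _ => trivial) hinj
    _ = (q ^ m) ^ B.ncard := by
        rw [Set.ncard_univ, Nat.card_fun, Nat.card_eq_fintype_card, hF, Nat.card_coe_set_eq]
    _ ≤ (q ^ m) ^ (s - 1) := Nat.pow_le_pow_right (by positivity) hB
    _ = q ^ (m * (s - 1)) := by rw [pow_mul]

end Decoding

theorem stmt7_general (q m s k n ρ t r d : ℕ) (hk1 : 1 ≤ k)
    {K F : Type*} [Field K] [Field F] [Algebra K F] [Fintype K] [Fintype F]
    (hK : Fintype.card K = q) (hF : Fintype.card F = q ^ m)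
    (γ : F) (hγ : ∀ i < m, ∀ j < m, i ≠ j → γ ^ q ^ i ≠ γ ^ q ^ j)
    (α : Fin n → F) (hα : LinearIndependent K α)
    (u : Fin k → F)
    (U : Submodule K (Fin (s + 1) → F))
    (hr : r = n - ρ + t) (hdimU : Module.finrank K U = r)
    (hUV : n - ρ ≤ Module.finrank K
      ↥(U ⊓ Submodule.span K (Set.range fun i : Fin n =>
          Fin.cons (α i) fun j : Fin s => (linPoly q u).eval (γ ^ (j : ℕ) * α i))))
    (hd : d = (r + s * (k - 1) + 1 + s) / (s + 1)) (hkd : k ≤ d)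
    (herr : s * ρ + t + s * (k - 1) < n * s) :
    (∃ (b0 : Fin d → F) (b : Fin s → Fin (d - k + 1) → F),
      ¬(b0 = 0 ∧ b = 0) ∧
      ∀ w ∈ U, (linPoly q b0).eval (w 0) +
        ∑ i : Fin s, (linPoly q (b i)).eval (w i.succ) = 0) ∧
    (∀ (b0 : Fin d → F) (b : Fin s → Fin (d - k + 1) → F),
      ¬(b0 = 0 ∧ b = 0) →
      (∀ w ∈ U, (linPoly q b0).eval (w 0) +
        ∑ i : Fin s, (linPoly q (b i)).eval (w i.succ) = 0) →
      linPoly q b0 +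
        ∑ l : Fin s, (linPoly q (b l)).comp ((linPoly q u).comp (C (γ ^ (l : ℕ)) * X)) = 0) ∧
    (∀ (b0 : Fin d → F) (b : Fin s → Fin (d - k + 1) → F),
      ¬(b0 = 0 ∧ b = 0) →
      (∀ w ∈ U, (linPoly q b0).eval (w 0) +
        ∑ i : Fin s, (linPoly q (b i)).eval (w i.succ) = 0) →
      Set.ncard {a : Fin k → F |
        linPoly q b0 +
          ∑ l : Fin s, (linPoly q (b l)).comp ((linPoly q a).comp (C (γ ^ (l : ℕ)) * X)) = 0}
        ≤ q ^ (m * (s - 1))) := by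
  have hdρ : d ≤ n - ρ := hd ▸ hr ▸ ceil_div_le_sub herr
  have hnm : n ≤ m := by
    simpa [finrank_eq_of_card_eq_pow hK hF] using hα.fintype_card_le_finrank
  refine ⟨exists_interpolation hK U ?_, fun b0 b _ hU =>
    interpolation_comp_message_eq_zero hK hk1 hkd (hdρ.trans hUV) hU,
    fun b0 b hne _ => ncard_message_candidates_le hK hF hγ (by omega) b0 b hne⟩
  rw [hdimU, hd]
  exact lt_add_mul_ceil_div_sub hk1 (hd ▸ hkd)

/-- Correctness of the list-decoder for the new subspace codes: if the received subspace `U`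
has dimension `r = n - ρ + t`, intersects the codeword subspace `V` of the message `u` in
dimension at least `n - ρ`, `d = ⌈(r + s(k-1) + 1)/(s+1)⌉ ≥ k`, and `sρ + t < ns - s(k-1)`,
then (i) a nonzero interpolation tuple `(Q_0, …, Q_s)` with the prescribed degree bounds
vanishing on `U` exists, (ii) every such tuple satisfies
`Q_0(X) + ∑ Q_i(f_u(γ^{i-1} X)) = 0`, and (iii) the number of linearized polynomials `f` of
`q`-degree at most `k-1` satisfying this identity is at most `q^{m(s-1)}`. -/
theorem stmt7 (q m s k n ρ t r d : ℕ) (hq : IsPrimePow q)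
    (hs : 1 ≤ s) (hk1 : 1 ≤ k) (hkm : k ≤ m) (hkn : k ≤ n)
    {K F : Type*} [Field K] [Field F] [Algebra K F] [Fintype K] [Fintype F]
    (hK : Fintype.card K = q) (hF : Fintype.card F = q ^ m)
    (γ : F) (hγ : ∀ i < m, ∀ j < m, i ≠ j → γ ^ q ^ i ≠ γ ^ q ^ j)
    (α : Fin n → F) (hα : LinearIndependent K α)
    (u : Fin k → F)
    (U : Submodule K (Fin (s + 1) → F))
    (hr : r = n - ρ + t) (hdimU : Module.finrank K U = r)
    (hUV : n - ρ ≤ Module.finrank K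
      ↥(U ⊓ Submodule.span K (Set.range fun i : Fin n =>
          Fin.cons (α i) fun j : Fin s => (linPoly q u).eval (γ ^ (j : ℕ) * α i))))
    (hd : d = (r + s * (k - 1) + 1 + s) / (s + 1)) (hkd : k ≤ d)
    (herr : s * ρ + t + s * (k - 1) < n * s) :
    (∃ (b0 : Fin d → F) (b : Fin s → Fin (d - k + 1) → F),
      ¬(b0 = 0 ∧ b = 0) ∧
      ∀ w ∈ U, (linPoly q b0).eval (w 0) +
        ∑ i : Fin s, (linPoly q (b i)).eval (w i.succ) = 0) ∧
    (∀ (b0 : Fin d → F) (b : Fin s → Fin (d - k + 1) → F),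
      ¬(b0 = 0 ∧ b = 0) →
      (∀ w ∈ U, (linPoly q b0).eval (w 0) +
        ∑ i : Fin s, (linPoly q (b i)).eval (w i.succ) = 0) →
      linPoly q b0 +
        ∑ l : Fin s, (linPoly q (b l)).comp ((linPoly q u).comp (C (γ ^ (l : ℕ)) * X)) = 0) ∧
    (∀ (b0 : Fin d → F) (b : Fin s → Fin (d - k + 1) → F),
      ¬(b0 = 0 ∧ b = 0) →
      (∀ w ∈ U, (linPoly q b0).eval (w 0) +
        ∑ i : Fin s, (linPoly q (b i)).eval (w i.succ) = 0) →
      Set.ncard {a : Fin k → F |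
        linPoly q b0 +
          ∑ l : Fin s, (linPoly q (b l)).comp ((linPoly q a).comp (C (γ ^ (l : ℕ)) * X)) = 0}
        ≤ q ^ (m * (s - 1))) :=
  stmt7_general q m s k n ρ t r d hk1 hK hF γ hγ α hα u U hr hdimU hUV hd hkd herr
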